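/- arXiv:2304.05768 — 4 statements merged into one kernel-verified Lean document; each statement's English description precedes it below -/
import Mathlib

section
/- Let f : ℝⁿ × ℝᵐ → ℝⁿ, let 𝒰 ⊆ ℝᵐ, let T ∈ ℕ, and let g, l : ℝⁿ → ℝ define the state constraint set 𝒳 = {x : g(x) ≤ 0} and terminal set 𝒳_T = {x : l(x) ≤ 0}. Suppose V : ℕ × ℝⁿ → ℝ is a storage function (i.e., for every t ∈ ℕ and x ∈ ℝⁿ there exists u ∈ 𝒰 with V(t+1, f(x,u)) ≤ V(t,x)) satisfying V(t,x) ≥ g(x) for all t ∈ {0,…,T} and all x ∈ ℝⁿ, and V(T,x) ≥ l(x) for all x ∈ ℝⁿ. Then for every x₀ ∈ ℝⁿ with V(0,x₀) ≤ 0 there exists a control sequence u : Fin T → ℝᵐ with u(t) ∈ 𝒰 for all t such that the trajectory defined by x(0) = x₀ and x(t+1) = f(x(t), u(t)) satisfies g(x(t)) ≤ 0 for all t ∈ {0,…,T} and l(x(T)) ≤ 0; that is, the sublevel set {x₀ : V(0,x₀) ≤ 0} is an inner approximation of the state-constrained backward reachable set of 𝒳_T over the horizon [0,T]. -/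
/-- Any storage function `V` satisfying `V t x ≥ g x` for `t ∈ {0,…,T}` and `V T x ≥ l x`
provides an inner approximation of the state-constrained backward reachable set of the
terminal set `{x | l x ≤ 0}` over the horizon `[0, T]`: from any `x₀` with `V 0 x₀ ≤ 0`
there is an admissible control sequence whose trajectory satisfies the state constraint
`g (x t) ≤ 0` at every step and reaches the terminal set. -/
theorem storage_function_inner_approx_reachable_set
    {n m : ℕ} (f : (Fin n → ℝ) → (Fin m → ℝ) → (Fin n → ℝ))
    (U : Set (Fin m → ℝ)) (T : ℕ) (g l : (Fin n → ℝ) → ℝ)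
    (V : ℕ → (Fin n → ℝ) → ℝ)
    (hstorage : ∀ (t : ℕ) (x : Fin n → ℝ), ∃ u ∈ U, V (t + 1) (f x u) ≤ V t x)
    (hg : ∀ t ≤ T, ∀ x : Fin n → ℝ, V t x ≥ g x)
    (hl : ∀ x : Fin n → ℝ, V T x ≥ l x)
    (x₀ : Fin n → ℝ) (hx₀ : V 0 x₀ ≤ 0) :
    ∃ u : Fin T → (Fin m → ℝ), (∀ t : Fin T, u t ∈ U) ∧
      ∃ x : ℕ → (Fin n → ℝ), x 0 = x₀ ∧
        (∀ t : Fin T, x (t + 1) = f (x t) (u t)) ∧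
        (∀ t ≤ T, g (x t) ≤ 0) ∧ l (x T) ≤ 0 := by
  choose uf hU hV using hstorage
  set x : ℕ → (Fin n → ℝ) := fun t => Nat.rec x₀ (fun s xs => f xs (uf s xs)) t with hx
  have hstep : ∀ t, x (t + 1) = f (x t) (uf t (x t)) := fun t => rfl
  have hVle : ∀ t, V t (x t) ≤ 0 := by
    intro t
    induction t with
    | zero => exact hx₀
    | succ s ih => exact le_trans (by rw [hstep]; exact hV s (x s)) ih
  refine ⟨fun t => uf t (x t), fun t => hU _ _, x, rfl, fun t => hstep t,
    fun t ht => le_trans (hg t ht (x t)) (hVle t), le_trans (hl (x T)) (hVle T)⟩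
end

section
/- Let f : ℝⁿ × ℝᵐ → ℝⁿ, 𝒰 ⊆ ℝᵐ, let g : ℝⁿ → ℝ, and let V : ℕ × ℝⁿ → ℝ be a storage function (for every t ∈ ℕ and x ∈ ℝⁿ there exists u ∈ 𝒰 with V(t+1, f(x,u)) ≤ V(t,x)) satisfying the contraction condition V(1,x) ≤ V(2,x) for every x with V(2,x) ≤ 0, and satisfying V(1,x) ≥ g(x) for all x ∈ ℝⁿ. Then for every x₀ ∈ ℝⁿ with V(0,x₀) ≤ 0 there exist infinite sequences u : ℕ → ℝᵐ with u_k ∈ 𝒰 for all k, and x : ℕ → ℝⁿ with x_0 = x₀ and x_{k+1} = f(x_k, u_k), such that V(1, x_k) ≤ 0 and hence g(x_k) ≤ 0 for all k ≥ 1; that is, the one-step MPC closed loop remains feasible and satisfies the state constraint g(x) ≤ 0 at every step. -/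
/-- Closed-loop feasibility and constraint satisfaction of the one-step MPC: from any
initial state with `V 0 x₀ ≤ 0` there exist infinite admissible input and state sequences
of the closed loop such that `V 1 (x k) ≤ 0`, hence `g (x k) ≤ 0`, for all `k ≥ 1`. -/
theorem one_step_mpc_closed_loop_constraint_satisfaction
    {n m : ℕ} (f : (Fin n → ℝ) → (Fin m → ℝ) → (Fin n → ℝ))
    (U : Set (Fin m → ℝ)) (g : (Fin n → ℝ) → ℝ) (V : ℕ → (Fin n → ℝ) → ℝ)
    (hstorage : ∀ (t : ℕ) (x : Fin n → ℝ), ∃ u ∈ U, V (t + 1) (f x u) ≤ V t x)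
    (hcontraction : ∀ x : Fin n → ℝ, V 2 x ≤ 0 → V 1 x ≤ V 2 x)
    (hg : ∀ x : Fin n → ℝ, V 1 x ≥ g x)
    (x₀ : Fin n → ℝ) (hx₀ : V 0 x₀ ≤ 0) :
    ∃ u : ℕ → (Fin m → ℝ), (∀ k : ℕ, u k ∈ U) ∧
      ∃ x : ℕ → (Fin n → ℝ), x 0 = x₀ ∧
        (∀ k : ℕ, x (k + 1) = f (x k) (u k)) ∧
        (∀ k ≥ 1, V 1 (x k) ≤ 0) ∧ (∀ k ≥ 1, g (x k) ≤ 0) := by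
  classical
  set F : ℕ → (Fin n → ℝ) → (Fin m → ℝ) := fun t x => (hstorage t x).choose with hFdef
  have hFU : ∀ t x, F t x ∈ U := fun t x => (hstorage t x).choose_spec.1
  have hFV : ∀ t x, V (t + 1) (f x (F t x)) ≤ V t x :=
    fun t x => (hstorage t x).choose_spec.2
  set x : ℕ → (Fin n → ℝ) :=
    fun k => Nat.rec x₀ (fun k xk => f xk (F (min k 1) xk)) k with hxdef
  have hstep : ∀ k, x (k + 1) = f (x k) (F (min k 1) (x k)) := fun k => rfl
  have key : ∀ k, V 1 (x (k + 1)) ≤ 0 := by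
    intro k
    induction k with
    | zero =>
      have := hFV 0 x₀
      calc V 1 (x 1) = V 1 (f x₀ (F 0 x₀)) := rfl
        _ ≤ V 0 x₀ := hFV 0 x₀
        _ ≤ 0 := hx₀
    | succ k ih =>
      have h2 : V 2 (x (k + 2)) ≤ 0 := by
        have : x (k + 2) = f (x (k + 1)) (F 1 (x (k + 1))) := by
          rw [hstep (k + 1)]; norm_num
        rw [this]
        exact le_trans (hFV 1 (x (k + 1))) ih
      exact le_trans (hcontraction _ h2) h2
  refine ⟨fun k => F (min k 1) (x k), fun k => hFU _ _, x, rfl, hstep, ?_, ?_⟩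
  · intro k hk
    obtain ⟨j, rfl⟩ := Nat.exists_eq_add_of_le hk
    simpa [Nat.add_comm] using key j
  · intro k hk
    obtain ⟨j, rfl⟩ := Nat.exists_eq_add_of_le hk
    exact le_trans (hg _) (by simpa [Nat.add_comm] using key j)
end

section
/- Let f : ℝⁿ × ℝᵐ → ℝⁿ be continuous, let 𝒰 ⊆ ℝᵐ be nonempty and compact, let K ⊆ ℝⁿ be nonempty and compact, let V₁ : ℝⁿ → ℝ be continuous, and let W(x,u) = xᵀQx + uᵀRu where Q ∈ ℝⁿˣⁿ and R ∈ ℝᵐˣᵐ are positive definite. Assume that for every x ∈ K there exists u ∈ 𝒰 with V₁(f(x,u)) < V₁(x). Then there exists α₀ > 0 such that for every x ∈ K there exists u ∈ 𝒰 with W(x,u) ≤ α₀·(V₁(x) − V₁(f(x,u))); that is, the terminal cost α₀·V₁ is a local control Lyapunov function for the stage cost W on K. -/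
/-! The sets `Sₙ = {x | ∃ u ∈ U, 0 < V₁ x - V₁ (f x u) ∧ W x u < (n + 1) · (V₁ x - V₁ (f x u))}`
are open, increase with `n`, and cover `K` because every state has a strictly decreasing
input. By compactness a single `Sₙ` already contains `K`, and `α₀ = n + 1` works. -/

open Matrix

theorem IsCompact.exists_pos_forall_exists_le_mul {X ι : Type*} [TopologicalSpace X]
    {K : Set X} (hK : IsCompact K) {U : Set ι} {c g : X → ι → ℝ}
    (hc : ∀ u ∈ U, Continuous (c · u)) (hg : ∀ u ∈ U, Continuous (g · u))
    (hpos : ∀ x ∈ K, ∃ u ∈ U, 0 < g x u) :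
    ∃ α > 0, ∀ x ∈ K, ∃ u ∈ U, c x u ≤ α * g x u := by
  set S : ℕ → Set X := fun N => ⋃ u ∈ U, {x | 0 < g x u ∧ c x u < (N + 1 : ℝ) * g x u}
  have hS_open : ∀ N, IsOpen (S N) := fun N =>
    isOpen_biUnion fun u hu =>
      (isOpen_lt continuous_const (hg u hu)).inter
        (isOpen_lt (hc u hu) (continuous_const.mul (hg u hu)))
  have hS_mono : Monotone S := by
    intro N N' hNN' x hx
    simp only [S, Set.mem_iUnion₂, Set.mem_ofPred_eq] at hx ⊢
    obtain ⟨u, hu, hgx, hcx⟩ := hx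
    have : (N + 1 : ℝ) ≤ N' + 1 := by gcongr
    exact ⟨u, hu, hgx, hcx.trans_le (mul_le_mul_of_nonneg_right this hgx.le)⟩
  have hK_cover : K ⊆ ⋃ N, S N := by
    intro x hx
    obtain ⟨u, hu, hgx⟩ := hpos x hx
    obtain ⟨N, hN⟩ := exists_nat_gt (c x u / g x u)
    refine Set.mem_iUnion.2 ⟨N, Set.mem_biUnion hu ⟨hgx, ?_⟩⟩
    rw [div_lt_iff₀ hgx] at hN
    nlinarith
  obtain ⟨N, hKN⟩ := hK.elim_directed_cover S hS_open hK_cover hS_mono.directed_le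
  refine ⟨N + 1, by positivity, fun x hx => ?_⟩
  obtain ⟨u, hu, -, hcx⟩ := Set.mem_iUnion₂.1 (hKN hx)
  exact ⟨u, hu, hcx.le⟩

theorem exists_alpha_control_lyapunov_general
    {n m : ℕ} (f : (Fin n → ℝ) → (Fin m → ℝ) → (Fin n → ℝ))
    (hf : Continuous fun p : (Fin n → ℝ) × (Fin m → ℝ) => f p.1 p.2)
    (U : Set (Fin m → ℝ))
    (K : Set (Fin n → ℝ)) (hK : IsCompact K)
    (V₁ : (Fin n → ℝ) → ℝ) (hV₁ : Continuous V₁)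
    (Q : Matrix (Fin n) (Fin n) ℝ) (R : Matrix (Fin m) (Fin m) ℝ)
    (W : (Fin n → ℝ) → (Fin m → ℝ) → ℝ)
    (hW : ∀ (x : Fin n → ℝ) (u : Fin m → ℝ), W x u = x ⬝ᵥ Q *ᵥ x + u ⬝ᵥ R *ᵥ u)
    (hdec : ∀ x ∈ K, ∃ u ∈ U, V₁ (f x u) < V₁ x) :
    ∃ α₀ > 0, ∀ x ∈ K, ∃ u ∈ U, W x u ≤ α₀ * (V₁ x - V₁ (f x u)) := by
  have hW_cont : ∀ u, Continuous (W · u) := fun u => by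
    simp only [hW]
    fun_prop
  have hdecrease_cont : ∀ u, Continuous fun x => V₁ x - V₁ (f x u) := fun u =>
    hV₁.sub (hV₁.comp (hf.comp (continuous_id.prodMk continuous_const)))
  exact hK.exists_pos_forall_exists_le_mul (fun u _ => hW_cont u) (fun u _ => hdecrease_cont u)
    fun x hx => (hdec x hx).imp fun _ ⟨hu, hlt⟩ => ⟨hu, sub_pos.2 hlt⟩

/-- Existence of a sufficiently large terminal-cost weight `α₀`: if from every state of
the compact set `K` there is an admissible input strictly decreasing `V₁`, then there is
`α₀ > 0` such that `α₀ · V₁` is a local control Lyapunov function for the quadratic stage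
cost `W(x,u) = xᵀQx + uᵀRu` on `K`. -/
theorem exists_alpha_control_lyapunov
    {n m : ℕ} (f : (Fin n → ℝ) → (Fin m → ℝ) → (Fin n → ℝ))
    (hf : Continuous fun p : (Fin n → ℝ) × (Fin m → ℝ) => f p.1 p.2)
    (U : Set (Fin m → ℝ)) (hU₀ : U.Nonempty) (hU : IsCompact U)
    (K : Set (Fin n → ℝ)) (hK₀ : K.Nonempty) (hK : IsCompact K)
    (V₁ : (Fin n → ℝ) → ℝ) (hV₁ : Continuous V₁)
    (Q : Matrix (Fin n) (Fin n) ℝ) (R : Matrix (Fin m) (Fin m) ℝ)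
    (hQ : Q.PosDef) (hR : R.PosDef)
    (W : (Fin n → ℝ) → (Fin m → ℝ) → ℝ)
    (hW : ∀ (x : Fin n → ℝ) (u : Fin m → ℝ), W x u = x ⬝ᵥ Q *ᵥ x + u ⬝ᵥ R *ᵥ u)
    (hdec : ∀ x ∈ K, ∃ u ∈ U, V₁ (f x u) < V₁ x) :
    ∃ α₀ > 0, ∀ x ∈ K, ∃ u ∈ U, W x u ≤ α₀ * (V₁ x - V₁ (f x u)) :=
  exists_alpha_control_lyapunov_general f hf U K hK V₁ hV₁ Q R W hW hdec
end

section
/- Let f : ℝⁿ × ℝᵐ → ℝⁿ, let 𝒰 ⊆ ℝᵐ be nonempty, let V₁ : ℝⁿ → ℝ be continuous with K = {x ∈ ℝⁿ : V₁(x) ≤ 0} nonempty and compact, let W(x,u) = xᵀQx + uᵀRu with Q ∈ ℝⁿˣⁿ and R ∈ ℝᵐˣᵐ positive definite, and let α > 0. Assume the control Lyapunov condition: for every y ∈ ℝⁿ with V₁(y) ≤ 0 there exists u ∈ 𝒰 with W(y,u) ≤ α·(V₁(y) − V₁(f(y,u))). Let (x_k)_{k≥0} in ℝⁿ and (u_k)_{k≥0}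 in 𝒰 be a closed-loop sequence such that x_{k+1} = f(x_k, u_k), V₁(x_{k+1}) ≤ 0, and each u_k is optimal for the one-step problem: for every u ∈ 𝒰 with V₁(f(x_k,u)) ≤ 0 one has α·V₁(f(x_k,u_k)) + W(x_k,u_k) ≤ α·V₁(f(x_k,u)) + W(x_k,u). Then x_k → 0 as k → ∞. -/
/-!
For `k ≥ 1` the optimal one-step cost `α V₁ (x (k+1)) + W (x k) (u k)` is bounded by
`α V₁ (x k)`, because the control Lyapunov input is a feasible competitor. Hence the values
`V₁ (x k)` decrease; they are bounded below since the iterates stay in the compact sublevel set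
`{V₁ ≤ 0}`, so the stage costs, squeezed by these decrements, tend to zero. Finally
`W x u ≥ c ‖x‖²` with `c > 0`, by positive definiteness of `Q`.
-/

open Matrix Filter Topology Set

theorem Matrix.PosDef.exists_pos_mul_sq_norm_le {ι : Type*} [Fintype ι] {Q : Matrix ι ι ℝ}
    (hQ : Q.PosDef) : ∃ c > 0, ∀ v : ι → ℝ, c * ‖v‖ ^ 2 ≤ v ⬝ᵥ Q *ᵥ v := by
  have hcont : Continuous fun v : ι → ℝ => v ⬝ᵥ Q *ᵥ v := by
    simp only [dotProduct, mulVec]; fun_prop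
  obtain ⟨c, hc, hsphere⟩ := (isCompact_sphere (0 : ι → ℝ) 1).exists_forall_le'
    hcont.continuousOn (a := 0) fun v hv =>
      hQ.dotProduct_mulVec_pos (ne_zero_of_mem_unit_sphere ⟨v, hv⟩)
  refine ⟨c, hc, fun v => ?_⟩
  rcases eq_or_ne v 0 with rfl | hv
  · simp
  have hnorm : 0 < ‖v‖ := norm_pos_iff.2 hv
  have hw : ‖v‖⁻¹ • v ∈ Metric.sphere (0 : ι → ℝ) 1 := by
    simp [norm_smul, hnorm.ne']
  have hscale : v ⬝ᵥ Q *ᵥ v = ‖v‖ ^ 2 * ((‖v‖⁻¹ • v) ⬝ᵥ Q *ᵥ (‖v‖⁻¹ • v)) := by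
    simp only [mulVec_smul, smul_dotProduct, dotProduct_smul, smul_eq_mul]
    field_simp
  rw [hscale, mul_comm c]
  exact mul_le_mul_of_nonneg_left (hsphere _ hw) (by positivity)

theorem tendsto_zero_of_mul_sq_norm_le {ι E : Type*} [SeminormedAddCommGroup E] {l : Filter ι}
    {x : ι → E} {w : ι → ℝ} {c : ℝ} (hc : 0 < c) (hle : ∀ i, c * ‖x i‖ ^ 2 ≤ w i)
    (hw : Tendsto w l (𝓝 0)) : Tendsto x l (𝓝 0) := by
  have hbound : Tendsto (fun i => √(w i / c)) l (𝓝 0) := by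
    simpa using (hw.div_const c).sqrt
  refine tendsto_zero_iff_norm_tendsto_zero.2 <|
    squeeze_zero (fun i => norm_nonneg _) (fun i => ?_) hbound
  refine Real.le_sqrt_of_sq_le ?_
  rw [le_div_iff₀ hc, mul_comm]
  exact hle i

theorem tendsto_zero_of_le_mul_sub_succ {V w : ℕ → ℝ} {α : ℝ} (hα : 0 < α)
    (hw : ∀ k, 0 ≤ w k) (hV : BddBelow (range V)) (hle : ∀ k, w k ≤ α * (V k - V (k + 1))) :
    Tendsto w atTop (𝓝 0) := by
  have hanti : Antitone V := antitone_nat_of_succ_le fun k =>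
    sub_nonneg.1 <| nonneg_of_mul_nonneg_right ((hw k).trans (hle k)) hα
  have hlim := tendsto_atTop_ciInf hanti hV
  have hdecr : Tendsto (fun k => α * (V k - V (k + 1))) atTop (𝓝 0) := by
    simpa using (hlim.sub (hlim.comp (tendsto_add_atTop_nat 1))).const_mul α
  exact squeeze_zero hw hle hdecr

theorem one_step_mpc_cost_le_of_clf {X Υ : Type*} {f : X → Υ → X} {U : Set Υ} {V : X → ℝ}
    {W : X → Υ → ℝ} {α : ℝ} {y : X} {u : Υ} (hα : 0 < α) (hW : ∀ v, 0 ≤ W y v)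
    (hy : V y ≤ 0) (hclf : ∃ v ∈ U, W y v ≤ α * (V y - V (f y v)))
    (hopt : ∀ v ∈ U, V (f y v) ≤ 0 → α * V (f y u) + W y u ≤ α * V (f y v) + W y v) :
    α * V (f y u) + W y u ≤ α * V y := by
  obtain ⟨v, hvU, hvW⟩ := hclf
  have hdecr : V (f y v) ≤ V y :=
    sub_nonneg.1 <| nonneg_of_mul_nonneg_right ((hW v).trans hvW) hα
  calc α * V (f y u) + W y u ≤ α * V (f y v) + W y v := hopt v hvU (hdecr.trans hy)
    _ ≤ α * V y := by linarith

theorem one_step_mpc_closed_loop_convergence_general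
    {n m : ℕ} (f : (Fin n → ℝ) → (Fin m → ℝ) → (Fin n → ℝ))
    (U : Set (Fin m → ℝ))
    (V₁ : (Fin n → ℝ) → ℝ) (hV₁ : Continuous V₁)
    (hK : IsCompact {x : Fin n → ℝ | V₁ x ≤ 0})
    (Q : Matrix (Fin n) (Fin n) ℝ) (R : Matrix (Fin m) (Fin m) ℝ)
    (hQ : Q.PosDef) (hR : R.PosDef)
    (W : (Fin n → ℝ) → (Fin m → ℝ) → ℝ)
    (hW : ∀ (x : Fin n → ℝ) (u : Fin m → ℝ), W x u = x ⬝ᵥ Q *ᵥ x + u ⬝ᵥ R *ᵥ u)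
    (α : ℝ) (hα : 0 < α)
    (hclf : ∀ y : Fin n → ℝ, V₁ y ≤ 0 →
      ∃ u ∈ U, W y u ≤ α * (V₁ y - V₁ (f y u)))
    (x : ℕ → (Fin n → ℝ)) (u : ℕ → (Fin m → ℝ))
    (hx : ∀ k : ℕ, x (k + 1) = f (x k) (u k))
    (hfeas : ∀ k : ℕ, V₁ (x (k + 1)) ≤ 0)
    (hoptimal : ∀ k : ℕ, ∀ u' ∈ U, V₁ (f (x k) u') ≤ 0 →
      α * V₁ (f (x k) (u k)) + W (x k) (u k) ≤ α * V₁ (f (x k) u') + W (x k) u') :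
    Filter.Tendsto x Filter.atTop (nhds 0) := by
  obtain ⟨c, hc, hQc⟩ := hQ.exists_pos_mul_sq_norm_le
  have hWc : ∀ y v, c * ‖y‖ ^ 2 ≤ W y v := fun y v => by
    have hRv : 0 ≤ v ⬝ᵥ R *ᵥ v := by simpa using hR.posSemidef.dotProduct_mulVec_nonneg v
    linarith [hQc y, hW y v]
  have hWnonneg : ∀ y v, 0 ≤ W y v := fun y v => (by positivity : 0 ≤ c * ‖y‖ ^ 2).trans (hWc y v)
  have hdecr : ∀ k, W (x (k + 1)) (u (k + 1)) ≤ α * (V₁ (x (k + 1)) - V₁ (x (k + 1 + 1))) := by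
    intro k
    have h := one_step_mpc_cost_le_of_clf hα (hWnonneg _) (hfeas k) (hclf _ (hfeas k))
      (hoptimal (k + 1))
    rw [← hx (k + 1)] at h
    linarith
  have hbdd : BddBelow (range fun k => V₁ (x (k + 1))) :=
    (hK.bddBelow_image hV₁.continuousOn).mono <| by
      rintro _ ⟨k, rfl⟩
      exact ⟨_, hfeas k, rfl⟩
  have hcost := tendsto_zero_of_le_mul_sub_succ hα (fun _ => hWnonneg _ _) hbdd hdecr
  exact (tendsto_add_atTop_iff_nat 1).1 <|
    tendsto_zero_of_mul_sq_norm_le hc (fun _ => hWc _ _) hcost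

/-- Attractivity of the origin for the one-step MPC closed loop: under the control
Lyapunov condition, any closed-loop sequence generated by optimizers of the one-step
problem converges to the origin. -/
theorem one_step_mpc_closed_loop_convergence
    {n m : ℕ} (f : (Fin n → ℝ) → (Fin m → ℝ) → (Fin n → ℝ))
    (U : Set (Fin m → ℝ)) (hU₀ : U.Nonempty)
    (V₁ : (Fin n → ℝ) → ℝ) (hV₁ : Continuous V₁)
    (hK₀ : {x : Fin n → ℝ | V₁ x ≤ 0}.Nonempty)
    (hK : IsCompact {x : Fin n → ℝ | V₁ x ≤ 0})
    (Q : Matrix (Fin n) (Fin n) ℝ) (R : Matrix (Fin m) (Fin m) ℝ)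
    (hQ : Q.PosDef) (hR : R.PosDef)
    (W : (Fin n → ℝ) → (Fin m → ℝ) → ℝ)
    (hW : ∀ (x : Fin n → ℝ) (u : Fin m → ℝ), W x u = x ⬝ᵥ Q *ᵥ x + u ⬝ᵥ R *ᵥ u)
    (α : ℝ) (hα : 0 < α)
    (hclf : ∀ y : Fin n → ℝ, V₁ y ≤ 0 →
      ∃ u ∈ U, W y u ≤ α * (V₁ y - V₁ (f y u)))
    (x : ℕ → (Fin n → ℝ)) (u : ℕ → (Fin m → ℝ))
    (hu : ∀ k : ℕ, u k ∈ U)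
    (hx : ∀ k : ℕ, x (k + 1) = f (x k) (u k))
    (hfeas : ∀ k : ℕ, V₁ (x (k + 1)) ≤ 0)
    (hoptimal : ∀ k : ℕ, ∀ u' ∈ U, V₁ (f (x k) u') ≤ 0 →
      α * V₁ (f (x k) (u k)) + W (x k) (u k) ≤ α * V₁ (f (x k) u') + W (x k) u') :
    Filter.Tendsto x Filter.atTop (nhds 0) :=
  one_step_mpc_closed_loop_convergence_general f U V₁ hV₁ hK Q R hQ hR W hW α hα hclf x u hx hfeas
    hoptimal
end
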